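/- Let d ≥ 1, θ ∈ 𝒮(ℝ^d;ℂ) and t > 0. For u ∈ L²(ℝ^d), let γ(t,v) = ∫_{ℝ^d} u(x) conj(Ψ_v(t,x)) dx. Then v ↦ γ(t,v) belongs to L²(ℝ^d) and ‖γ(t,·)‖_{L²_v(ℝ^d)} ≤ 2^{−d/2} ‖θ‖_{L¹(ℝ^d)} ‖u‖_{L²(ℝ^d)}. -/

import Mathlib

/-!
Since `|e^{i|x|²/(4t)}| = 1`, we have `|γ(v)| ≤ ∫ K(v,x) |u(x)| dx` with the nonnegative kernel
`K(v,x) = |θ((x - 2tv)/√t)|`. Its row integrals are `∫ K(v,x) dx = t^{d/2} ‖θ‖₁` and its column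
integrals `∫ K(v,x) dv = (2√t)^{-d} ‖θ‖₁`, so Schur's test (Cauchy–Schwarz in `x`, then Tonelli)
bounds the `L²` norm of `γ` by the square root of their product, `2^{-d/2} ‖θ‖₁`, times `‖u‖₂`.
-/

open MeasureTheory
open scoped ENNReal

theorem ENNReal.sq_lintegral_mul_le {α : Type*} [MeasurableSpace α] {μ : Measure α}
    {w f : α → ℝ≥0∞} (hw : AEMeasurable w μ) (hf : AEMeasurable f μ) :
    (∫⁻ x, w x * f x ∂μ) ^ 2 ≤ (∫⁻ x, w x ∂μ) * ∫⁻ x, w x * f x ^ 2 ∂μ := by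
  have hsq : ∀ a : ℝ≥0∞, (a ^ (2⁻¹ : ℝ)) ^ 2 = a := fun a => by
    rw [← ENNReal.rpow_two, ENNReal.rpow_inv_rpow two_ne_zero]
  have hroot := hw.pow_const (2⁻¹ : ℝ)
  -- Hölder for `√w` and `√w * f`
  have holder := ENNReal.lintegral_mul_le_Lp_mul_Lq μ Real.HolderConjugate.two_two hroot
    (hroot.mul hf)
  simp only [Pi.mul_apply, ← mul_assoc, ← sq, hsq, ENNReal.rpow_two, mul_pow] at holder
  calc (∫⁻ x, w x * f x ∂μ) ^ 2
      ≤ ((∫⁻ x, w x ∂μ) ^ (1 / 2 : ℝ) * (∫⁻ x, w x * f x ^ 2 ∂μ) ^ (1 / 2 : ℝ)) ^ 2 := by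
        gcongr
    _ = (∫⁻ x, w x ∂μ) * ∫⁻ x, w x * f x ^ 2 ∂μ := by
        rw [mul_pow, one_div, hsq, hsq]

theorem eLpNorm_two_sq_eq_lintegral {α E : Type*} [MeasurableSpace α] {μ : Measure α} [ENorm E]
    (f : α → E) : eLpNorm f 2 μ ^ 2 = ∫⁻ x, ‖f x‖ₑ ^ 2 ∂μ := by
  simpa using eLpNorm_nnreal_pow_eq_lintegral (f := f) (μ := μ) (p := 2) two_ne_zero

section SchurTest

variable {α β : Type*} [MeasurableSpace α] [MeasurableSpace β] {μ : Measure α} {ν : Measure β}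
  [SFinite μ] [SFinite ν] {K : α → β → ℝ≥0∞} {A B : ℝ≥0∞}

theorem lintegral_sq_lintegral_kernel_mul_le (hK : Measurable (Function.uncurry K))
    (hA : ∀ v, ∫⁻ x, K v x ∂ν ≤ A) (hB : ∀ x, ∫⁻ v, K v x ∂μ ≤ B)
    {f : β → ℝ≥0∞} (hf : AEMeasurable f ν) :
    ∫⁻ v, (∫⁻ x, K v x * f x ∂ν) ^ 2 ∂μ ≤ A * B * ∫⁻ x, f x ^ 2 ∂ν := by
  have hKf : AEMeasurable (fun p : α × β => K p.1 p.2 * f p.2 ^ 2) (μ.prod ν) :=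
    hK.aemeasurable.mul ((hf.pow_const 2).comp_quasiMeasurePreserving
      Measure.quasiMeasurePreserving_snd)
  calc ∫⁻ v, (∫⁻ x, K v x * f x ∂ν) ^ 2 ∂μ
      ≤ ∫⁻ v, A * ∫⁻ x, K v x * f x ^ 2 ∂ν ∂μ := lintegral_mono fun v =>
        (ENNReal.sq_lintegral_mul_le hK.of_uncurry_left.aemeasurable hf).trans
          (mul_le_mul_left (hA v) _)
    _ = A * ∫⁻ x, ∫⁻ v, K v x * f x ^ 2 ∂μ ∂ν := by
        rw [lintegral_const_mul'' _ hKf.lintegral_prod_right', lintegral_lintegral_swap hKf]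
    _ = A * ∫⁻ x, (∫⁻ v, K v x ∂μ) * f x ^ 2 ∂ν := by
        simp_rw [lintegral_mul_const _ hK.of_uncurry_right]
    _ ≤ A * ∫⁻ x, B * f x ^ 2 ∂ν := by gcongr with x; exact hB x
    _ = A * B * ∫⁻ x, f x ^ 2 ∂ν := by rw [lintegral_const_mul'' _ (hf.pow_const 2), mul_assoc]

theorem eLpNorm_two_le_of_enorm_le_lintegral_kernel {E F : Type*} [ENorm E] [TopologicalSpace F]
    [ContinuousENorm F] (hK : Measurable (Function.uncurry K))
    (hA : ∀ v, ∫⁻ x, K v x ∂ν ≤ A) (hB : ∀ x, ∫⁻ v, K v x ∂μ ≤ B) {C : ℝ≥0∞}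
    (hABC : A * B ≤ C ^ 2) {f : β → F} (hf : AEStronglyMeasurable f ν) {g : α → E}
    (hg : ∀ v, ‖g v‖ₑ ≤ ∫⁻ x, K v x * ‖f x‖ₑ ∂ν) :
    eLpNorm g 2 μ ≤ C * eLpNorm f 2 ν := by
  rw [← ENNReal.pow_le_pow_left_iff two_ne_zero, mul_pow, eLpNorm_two_sq_eq_lintegral,
    eLpNorm_two_sq_eq_lintegral]
  calc ∫⁻ v, ‖g v‖ₑ ^ 2 ∂μ ≤ ∫⁻ v, (∫⁻ x, K v x * ‖f x‖ₑ ∂ν) ^ 2 ∂μ := by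
        gcongr with v; exact hg v
    _ ≤ A * B * ∫⁻ x, ‖f x‖ₑ ^ 2 ∂ν := lintegral_sq_lintegral_kernel_mul_le hK hA hB hf.enorm
    _ ≤ C ^ 2 * ∫⁻ x, ‖f x‖ₑ ^ 2 ∂ν := by gcongr

end SchurTest

section HaarScaling

variable {E : Type*} [NormedAddCommGroup E] [NormedSpace ℝ E] [MeasurableSpace E] [BorelSpace E]
  [FiniteDimensional ℝ E] (μ : Measure E) [μ.IsAddHaarMeasure] {g : E → ℝ≥0∞}

theorem lintegral_comp_smul_add (hg : Measurable g) {a : ℝ} (ha : a ≠ 0) (b : E) :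
    ∫⁻ x, g (a • x + b) ∂μ = ENNReal.ofReal (|a| ^ Module.finrank ℝ E)⁻¹ * ∫⁻ y, g y ∂μ := by
  have hmap : μ.map (fun x => a • x + b) = ENNReal.ofReal (|a| ^ Module.finrank ℝ E)⁻¹ • μ := by
    change μ.map ((· + b) ∘ (a • ·)) = _
    rw [← Measure.map_map (measurable_add_const b) (measurable_const_smul a),
      Measure.map_addHaar_smul μ ha, Measure.map_smul, map_add_right_eq_self, abs_inv, abs_pow]
  rw [← lintegral_map hg ((measurable_const_smul a).add_const b), hmap, lintegral_smul_measure,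
    smul_eq_mul]

theorem lintegral_comp_smul_sub_smul_left (hg : Measurable g) {a : ℝ} (ha : a ≠ 0) (c : ℝ)
    (v : E) :
    ∫⁻ x, g (a • (x - c • v)) ∂μ = ENNReal.ofReal (|a| ^ Module.finrank ℝ E)⁻¹ * ∫⁻ y, g y ∂μ := by
  simp_rw [smul_sub, sub_eq_add_neg]
  exact lintegral_comp_smul_add μ hg ha (-(a • c • v))

theorem lintegral_comp_smul_sub_smul_right (hg : Measurable g) {a c : ℝ} (hac : a * c ≠ 0)
    (x : E) :
    ∫⁻ v, g (a • (x - c • v)) ∂μ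
      = ENNReal.ofReal (|a * c| ^ Module.finrank ℝ E)⁻¹ * ∫⁻ y, g y ∂μ := by
  have h : ∀ v : E, a • (x - c • v) = (-(a * c)) • v + a • x := fun v => by
    rw [smul_sub, smul_smul, neg_smul, neg_add_eq_sub]
  simp_rw [h]
  rw [lintegral_comp_smul_add μ hg (neg_ne_zero.2 hac), abs_neg]

end HaarScaling

theorem enorm_exp_I_mul_ofReal (r : ℝ) : ‖Complex.exp (Complex.I * r)‖ₑ = 1 := by
  rw [← ofReal_norm, mul_comm, Complex.norm_exp_ofReal_mul_I, ENNReal.ofReal_one]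

section WavePacket

variable {E : Type*} [NormedAddCommGroup E] [NormedSpace ℝ E] [MeasurableSpace E]
  (μ : Measure E) (θ : E → ℂ) (a c t : ℝ) (u : E → ℂ)

theorem enorm_integral_mul_conj_wavePacket_le (v : E) :
    ‖∫ x, u x * starRingEnd ℂ (θ (a • (x - c • v)) *
        Complex.exp (Complex.I * ((‖x‖ : ℂ) ^ 2 / (4 * (t : ℂ))))) ∂μ‖ₑ
      ≤ ∫⁻ x, ‖θ (a • (x - c • v))‖ₑ * ‖u x‖ₑ ∂μ := by
  refine (enorm_integral_le_lintegral_enorm _).trans_eq (lintegral_congr fun x => ?_)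
  have hphase : (‖x‖ : ℂ) ^ 2 / (4 * (t : ℂ)) = ((‖x‖ ^ 2 / (4 * t) : ℝ) : ℂ) := by
    push_cast; ring
  rw [enorm_mul, RCLike.enorm_conj, enorm_mul, hphase, enorm_exp_I_mul_ofReal, mul_one, mul_comm]

theorem aestronglyMeasurable_integral_mul_conj_wavePacket [BorelSpace E]
    [SecondCountableTopology E] [SFinite μ] (hθ : Continuous θ) (hu : AEStronglyMeasurable u μ) :
    AEStronglyMeasurable (fun v => ∫ x, u x * starRingEnd ℂ (θ (a • (x - c • v)) *
        Complex.exp (Complex.I * ((‖x‖ : ℂ) ^ 2 / (4 * (t : ℂ))))) ∂μ) μ := by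
  have hF : AEStronglyMeasurable (fun p : E × E => u p.2 * starRingEnd ℂ
      (θ (a • (p.2 - c • p.1)) * Complex.exp (Complex.I * ((‖p.2‖ : ℂ) ^ 2 / (4 * (t : ℂ))))))
      (μ.prod μ) :=
    (hu.comp_quasiMeasurePreserving Measure.quasiMeasurePreserving_snd).mul
      (Continuous.aestronglyMeasurable (by fun_prop))
  exact hF.integral_prod_right'

end WavePacket

theorem inv_abs_pow_mul_inv_abs_pow_eq_two_rpow_sq {t : ℝ} (ht : 0 < t) (d : ℕ) :
    (|(√t)⁻¹| ^ d)⁻¹ * (|(√t)⁻¹ * (2 * t)| ^ d)⁻¹ = ((2 : ℝ) ^ (-(d : ℝ) / 2)) ^ 2 := by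
  have h : (√t)⁻¹ * ((√t)⁻¹ * (2 * t)) = 2 := by
    rw [← mul_assoc, ← mul_inv, Real.mul_self_sqrt ht.le]
    field_simp
  rw [← mul_inv, ← mul_pow, ← abs_mul, h, abs_two, ← Real.rpow_mul_natCast zero_le_two,
    Nat.cast_two, div_mul_cancel₀ _ two_ne_zero, Real.rpow_neg zero_le_two, Real.rpow_natCast]

theorem statement9_general (d : ℕ)
    (θ : SchwartzMap (EuclideanSpace ℝ (Fin d)) ℂ)
    (t : ℝ) (ht : 0 < t)
    (u : EuclideanSpace ℝ (Fin d) → ℂ)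
    (hu : MemLp u 2 (volume : Measure (EuclideanSpace ℝ (Fin d))))
    (γ : EuclideanSpace ℝ (Fin d) → ℂ)
    (hγ : ∀ v, γ v = ∫ x, u x *
      (starRingEnd ℂ) (θ ((Real.sqrt t)⁻¹ • (x - (2 * t) • v)) *
        Complex.exp (Complex.I * ((‖x‖ : ℂ) ^ 2 / (4 * (t : ℂ)))))) :
    MemLp γ 2 (volume : Measure (EuclideanSpace ℝ (Fin d))) ∧
    eLpNorm γ 2 volume ≤
      ENNReal.ofReal ((2 : ℝ) ^ (-(d : ℝ) / 2) * ∫ x, ‖θ x‖) *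
        eLpNorm u 2 volume := by
  set a := (√t)⁻¹
  have ha : a ≠ 0 := inv_ne_zero (Real.sqrt_pos.2 ht).ne'
  set L := ∫⁻ y, ‖θ y‖ₑ
  set K : EuclideanSpace ℝ (Fin d) → EuclideanSpace ℝ (Fin d) → ℝ≥0∞ :=
    fun v x => ‖θ (a • (x - (2 * t) • v))‖ₑ
  have hθ : Measurable fun y => ‖θ y‖ₑ := θ.continuous.measurable.enorm
  have hK : Measurable (Function.uncurry K) := hθ.comp (by fun_prop)
  have hA (v) : ∫⁻ x, K v x = ENNReal.ofReal (|a| ^ d)⁻¹ * L := by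
    simpa using lintegral_comp_smul_sub_smul_left volume hθ ha (2 * t) v
  have hB (x) : ∫⁻ v, K v x = ENNReal.ofReal (|a * (2 * t)| ^ d)⁻¹ * L := by
    simpa using lintegral_comp_smul_sub_smul_right volume hθ (c := 2 * t) (by positivity) x
  have hABC : ENNReal.ofReal (|a| ^ d)⁻¹ * L * (ENNReal.ofReal (|a * (2 * t)| ^ d)⁻¹ * L)
      = ENNReal.ofReal ((2 : ℝ) ^ (-(d : ℝ) / 2) * ∫ x, ‖θ x‖) ^ 2 := by
    rw [ENNReal.ofReal_mul (by positivity), ofReal_integral_norm_eq_lintegral_enorm θ.integrable,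
      mul_pow, ← ENNReal.ofReal_pow (by positivity),
      ← inv_abs_pow_mul_inv_abs_pow_eq_two_rpow_sq ht, ENNReal.ofReal_mul (by positivity)]
    ring
  have hγK (v) : ‖γ v‖ₑ ≤ ∫⁻ x, K v x * ‖u x‖ₑ := by
    rw [hγ v]
    exact enorm_integral_mul_conj_wavePacket_le volume θ a (2 * t) t u v
  have hbound := eLpNorm_two_le_of_enorm_le_lintegral_kernel hK (fun v => (hA v).le)
    (fun x => (hB x).le) hABC.le hu.1 hγK
  have hγm : AEStronglyMeasurable γ := by
    rw [funext hγ]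
    exact aestronglyMeasurable_integral_mul_conj_wavePacket volume θ a (2 * t) t u θ.continuous
      hu.1
  exact ⟨⟨hγm, hbound.trans_lt (ENNReal.mul_lt_top ENNReal.ofReal_lt_top hu.2)⟩, hbound⟩

/-- For `u ∈ L²(ℝ^d)` and
`γ(t,v) = ∫ u(x) conj(Ψ_v(t,x)) dx` with the wave packet
`Ψ_v(t,x) = θ((x - 2tv)/√t) e^{i|x|²/(4t)}`, the function `v ↦ γ(t,v)` belongs
to `L²(ℝ^d)` with `‖γ(t,·)‖_{L²_v} ≤ 2^{-d/2} ‖θ‖_{L¹} ‖u‖_{L²}`. -/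
theorem statement9 (d : ℕ) (hd : 1 ≤ d)
    (θ : SchwartzMap (EuclideanSpace ℝ (Fin d)) ℂ)
    (t : ℝ) (ht : 0 < t)
    (u : EuclideanSpace ℝ (Fin d) → ℂ)
    (hu : MemLp u 2 (volume : Measure (EuclideanSpace ℝ (Fin d))))
    (γ : EuclideanSpace ℝ (Fin d) → ℂ)
    (hγ : ∀ v, γ v = ∫ x, u x *
      (starRingEnd ℂ) (θ ((Real.sqrt t)⁻¹ • (x - (2 * t) • v)) *
        Complex.exp (Complex.I * ((‖x‖ : ℂ) ^ 2 / (4 * (t : ℂ)))))) :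
    MemLp γ 2 (volume : Measure (EuclideanSpace ℝ (Fin d))) ∧
    eLpNorm γ 2 volume ≤
      ENNReal.ofReal ((2 : ℝ) ^ (-(d : ℝ) / 2) * ∫ x, ‖θ x‖) *
        eLpNorm u 2 volume :=
  statement9_general d θ t ht u hu γ hγ
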